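/- The generating functions G_b satisfy the functional equation G_b(x) = (x^{b−1}/(1−x^{b−1})) · (G_{b−1}(x) + 1) for all b ≥ 2, where G_1(x) = 0. -/

import Mathlib

/-- `gFun b n` is the number of supporting `(n,b)`-domino towers, defined by the recurrence
`g_b(n) = g_b(n-b+1) + g_{b-1}(n-b+1)` with `g_b(b-1) = 1` for `b ≥ 2` and
`g_b(n) = 0` for `n < 1`, `b < 2`, or `n < b - 1`. -/
def gFun : ℕ → ℕ → ℕ
  | b, n =>
    if b < 2 ∨ n + 1 < b then 0
    else if n + 1 = b then 1
    else gFun b (n + 1 - b) + gFun (b - 1) (n + 1 - b)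
termination_by b n => n
decreasing_by all_goals omega

/-!
With `k = b - 1`, the recurrence and its initial value say `g_b(n + k) = g_b(n) + g_{b-1}(n) + [n = 0]`
and `g_b(n) = 0` for `n < k`, i.e. `G_b = xᵏ (G_b + G_{b-1} + 1)`. This linear equation is solved
for `G_b` by inverting `1 - xᵏ`.
-/

open PowerSeries

theorem gFun_zero (b : ℕ) : gFun b 0 = 0 := by
  rw [gFun]
  split_ifs <;> omega

theorem gFun_of_lt {b n : ℕ} (h : n + 1 < b) : gFun b n = 0 := by
  rw [gFun, if_pos (Or.inr h)]

theorem gFun_one (n : ℕ) : gFun 1 n = 0 := by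
  rw [gFun, if_pos (Or.inl one_lt_two)]

theorem gFun_add {k : ℕ} (hk : 1 ≤ k) (n : ℕ) :
    gFun (k + 1) (n + k) = gFun (k + 1) n + gFun k n + if n = 0 then 1 else 0 := by
  rw [gFun]
  rcases Nat.eq_zero_or_pos n with rfl | hn
  · simp only [gFun_zero, if_true]
    rw [if_neg (by omega), if_pos (by omega)]
  · rw [if_neg (by omega), if_neg (by omega), if_neg hn.ne', add_zero]
    simp only [Nat.add_sub_cancel, show n + k + 1 - (k + 1) = n by omega]

theorem PowerSeries.eq_mul_inv_one_sub_mul_of_eq_mul_add {K : Type*} [Field K] {P F H : K⟦X⟧}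
    (hP : constantCoeff P = 0) (h : F = P * (F + H)) : F = P * (1 - P)⁻¹ * H := by
  have hunit : constantCoeff (1 - P) ≠ 0 := by simp [hP]
  rw [mul_right_comm, eq_mul_inv_iff_mul_eq hunit]
  linear_combination h

theorem genFun_eq_X_pow_mul {k : ℕ} (hk : 1 ≤ k) :
    mk (fun n => (gFun (k + 1) n : ℚ)) =
      X ^ k * (mk (fun n => (gFun (k + 1) n : ℚ)) + (mk (fun n => (gFun k n : ℚ)) + 1)) := by
  ext n
  rw [coeff_X_pow_mul']
  split_ifs with hn
  · obtain ⟨m, rfl⟩ := Nat.exists_eq_add_of_le' hn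
    simp [gFun_add hk, coeff_one, add_assoc]
  · simp [gFun_of_lt (by omega : n + 1 < k + 1)]

open PowerSeries in
/-- The generating functions `G_b(x) = Σ_{n≥0} g_b(n) xⁿ` satisfy the functional equation
`G_b(x) = (x^{b-1}/(1-x^{b-1})) (G_{b-1}(x) + 1)` for all `b ≥ 2`, where `G_1(x) = 0`. -/
theorem supporting_tower_genFun_eq :
    (∀ b : ℕ, 2 ≤ b →
      PowerSeries.mk (fun n => (gFun b n : ℚ)) =
        (X : PowerSeries ℚ) ^ (b - 1) * (1 - (X : PowerSeries ℚ) ^ (b - 1))⁻¹ *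
          (PowerSeries.mk (fun n => (gFun (b - 1) n : ℚ)) + 1)) ∧
    PowerSeries.mk (fun n => (gFun 1 n : ℚ)) = 0 := by
  refine ⟨fun b hb => ?_, by ext; simp [gFun_one]⟩
  obtain ⟨k, rfl⟩ := Nat.exists_eq_add_of_le' (by omega : 1 ≤ b)
  exact eq_mul_inv_one_sub_mul_of_eq_mul_add (by simp; omega) (genFun_eq_X_pow_mul (by omega))
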